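/- The strict-tolerant n-tuple consequence coincides with ST consequence: for all sets of sentences Γ ∪ {A}, Γ ⊨_{n,s,t} A if and only if Γ ⊨_{st} A. -/

import Mathlib

/-- Helper instance so that instance search for the lexicographic order does not get stuck. -/
instance (n : ℕ) : WellFoundedLT (Fin n) := inferInstance

/-- `2^n`: the `n`-fold product of the two-element Boolean algebra `2 = {0,1}` (as `Bool`,
with `false = 0`, `true = 1`), carrying the lexicographic order. -/
abbrev Tup (n : ℕ) := Lex (Fin n → Bool)

/-- The componentwise complement `-⟨x₁,…,xₙ⟩ = ⟨1-x₁,…,1-xₙ⟩` on `2^n`. -/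
def tneg {n : ℕ} (x : Tup n) : Tup n := toLex fun i => !(ofLex x i)

/-- The top value `⟨1,…,1⟩` of `2^n`. -/
def tTop (n : ℕ) : Tup n := toLex fun _ => true

/-- The bottom value `⟨0,…,0⟩` of `2^n`. -/
def tBot (n : ℕ) : Tup n := toLex fun _ => false

/-- The three truth values `f < i < t` (i.e. `0 < 1/2 < 1`). -/
inductive V3 where
  | f | i | t
deriving DecidableEq

instance instFintypeV3 : Fintype V3 :=
  ⟨{V3.f, V3.i, V3.t}, by intro x; cases x <;> simp⟩

def V3.toFin : V3 → Fin 3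
  | .f => 0 | .i => 1 | .t => 2

instance : LinearOrder V3 := LinearOrder.lift' V3.toFin (by decide)

/-- Three-valued negation: `1 - x`. -/
def V3.negv : V3 → V3
  | .t => .f | .i => .i | .f => .t

instance (n : ℕ) : Fintype (Tup n) := Fintype.ofEquiv _ toLex
instance (n : ℕ) : Nonempty (Tup n) := ⟨tBot n⟩
noncomputable instance (n : ℕ) : CompleteLinearOrder (Tup n) :=
  Fintype.toCompleteLinearOrder _
instance : Nonempty V3 := ⟨V3.t⟩
noncomputable instance : CompleteLinearOrder V3 :=
  Fintype.toCompleteLinearOrderOfNonempty _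

/-- Terms of a first-order language: variables and constant symbols. -/
inductive Term (Const : Type) where
  | var : ℕ → Term Const
  | const : Const → Term Const

/-- First-order formulas over predicate symbols `Pred` (with arities `ar`),
constants `Const`, and the connectives `¬, ∧, ∨, ∀, ∃`. -/
inductive FForm (Pred Const : Type) (ar : Pred → ℕ) where
  | atom : (P : Pred) → (Fin (ar P) → Term Const) → FForm Pred Const ar
  | neg : FForm Pred Const ar → FForm Pred Const ar
  | conj : FForm Pred Const ar → FForm Pred Const ar → FForm Pred Const ar
  | disj : FForm Pred Const ar → FForm Pred Const ar → FForm Pred Const ar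
  | all : ℕ → FForm Pred Const ar → FForm Pred Const ar
  | ex : ℕ → FForm Pred Const ar → FForm Pred Const ar

/-- Evaluation of terms, given interpretations of the constants and an assignment. -/
def Term.evalt {Const D : Type} (cv : Const → D) (σ : ℕ → D) : Term Const → D
  | .var x => σ x
  | .const c => cv c

/-- The Clemens valuation over `2^n`: componentwise complement for `¬`, lexicographic
min/max for `∧`/`∨`, and inf/sup over the domain for the quantifiers. -/
noncomputable def fevalT {Pred Const : Type} {ar : Pred → ℕ} {n : ℕ} {D : Type}
    (cv : Const → D) (pv : (P : Pred) → (Fin (ar P) → D) → Tup n) (σ : ℕ → D) :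
    FForm Pred Const ar → Tup n
  | .atom P ts => pv P fun j => (ts j).evalt cv σ
  | .neg A => tneg (fevalT cv pv σ A)
  | .conj A B => min (fevalT cv pv σ A) (fevalT cv pv σ B)
  | .disj A B => max (fevalT cv pv σ A) (fevalT cv pv σ B)
  | .all x A => ⨅ d : D, fevalT cv pv (Function.update σ x d) A
  | .ex x A => ⨆ d : D, fevalT cv pv (Function.update σ x d) A

/-- The three-valued (strong Kleene / LP) valuation over `{0, 1/2, 1}`: `1 - x` for `¬`,
min/max for `∧`/`∨`, and inf/sup over the domain for the quantifiers. -/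
noncomputable def feval3 {Pred Const : Type} {ar : Pred → ℕ} {D : Type}
    (cv : Const → D) (pv : (P : Pred) → (Fin (ar P) → D) → V3) (σ : ℕ → D) :
    FForm Pred Const ar → V3
  | .atom P ts => pv P fun j => (ts j).evalt cv σ
  | .neg A => (feval3 cv pv σ A).negv
  | .conj A B => min (feval3 cv pv σ A) (feval3 cv pv σ B)
  | .disj A B => max (feval3 cv pv σ A) (feval3 cv pv σ B)
  | .all x A => ⨅ d : D, feval3 cv pv (Function.update σ x d) A
  | .ex x A => ⨆ d : D, feval3 cv pv (Function.update σ x d) A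

/-- Strict consequence `Γ ⊨_{n,s} A`: in every Clemens interpretation (with nonempty
domain) and assignment, if every premise takes the value `⟨1,…,1⟩`, so does `A`. -/
def ConseqS (n : ℕ) (Pred Const : Type) (ar : Pred → ℕ)
    (Γ : Set (FForm Pred Const ar)) (A : FForm Pred Const ar) : Prop :=
  ∀ (D : Type) (_ : Nonempty D) (cv : Const → D)
    (pv : (P : Pred) → (Fin (ar P) → D) → Tup n) (σ : ℕ → D),
    (∀ B ∈ Γ, fevalT cv pv σ B = tTop n) → fevalT cv pv σ A = tTop n

/-- Tolerant consequence `Γ ⊨_{n,t} A`: preservation of values `≠ ⟨0,…,0⟩`. -/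
def ConseqT (n : ℕ) (Pred Const : Type) (ar : Pred → ℕ)
    (Γ : Set (FForm Pred Const ar)) (A : FForm Pred Const ar) : Prop :=
  ∀ (D : Type) (_ : Nonempty D) (cv : Const → D)
    (pv : (P : Pred) → (Fin (ar P) → D) → Tup n) (σ : ℕ → D),
    (∀ B ∈ Γ, fevalT cv pv σ B ≠ tBot n) → fevalT cv pv σ A ≠ tBot n

/-- Strict-tolerant consequence `Γ ⊨_{n,s,t} A`: if all premises take value `⟨1,…,1⟩`,
the conclusion takes a value `≠ ⟨0,…,0⟩`. -/
def ConseqNST (n : ℕ) (Pred Const : Type) (ar : Pred → ℕ)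
    (Γ : Set (FForm Pred Const ar)) (A : FForm Pred Const ar) : Prop :=
  ∀ (D : Type) (_ : Nonempty D) (cv : Const → D)
    (pv : (P : Pred) → (Fin (ar P) → D) → Tup n) (σ : ℕ → D),
    (∀ B ∈ Γ, fevalT cv pv σ B = tTop n) → fevalT cv pv σ A ≠ tBot n

/-- K3 consequence `Γ ⊨_k A`: preservation of the value `1` in all three-valued
(strong Kleene) interpretations. -/
def ConseqK (Pred Const : Type) (ar : Pred → ℕ)
    (Γ : Set (FForm Pred Const ar)) (A : FForm Pred Const ar) : Prop :=
  ∀ (D : Type) (_ : Nonempty D) (cv : Const → D)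
    (pv : (P : Pred) → (Fin (ar P) → D) → V3) (σ : ℕ → D),
    (∀ B ∈ Γ, feval3 cv pv σ B = V3.t) → feval3 cv pv σ A = V3.t

/-- LP consequence `Γ ⊨_l A`: preservation of the designated values `{1, 1/2}`. -/
def ConseqL (Pred Const : Type) (ar : Pred → ℕ)
    (Γ : Set (FForm Pred Const ar)) (A : FForm Pred Const ar) : Prop :=
  ∀ (D : Type) (_ : Nonempty D) (cv : Const → D)
    (pv : (P : Pred) → (Fin (ar P) → D) → V3) (σ : ℕ → D),
    (∀ B ∈ Γ, feval3 cv pv σ B ∈ ({V3.t, V3.i} : Set V3)) →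
      feval3 cv pv σ A ∈ ({V3.t, V3.i} : Set V3)

/-- ST consequence `Γ ⊨_st A`: if all premises take value `1`, the conclusion takes a
value in `{1, 1/2}`. -/
def ConseqST (Pred Const : Type) (ar : Pred → ℕ)
    (Γ : Set (FForm Pred Const ar)) (A : FForm Pred Const ar) : Prop :=
  ∀ (D : Type) (_ : Nonempty D) (cv : Const → D)
    (pv : (P : Pred) → (Fin (ar P) → D) → V3) (σ : ℕ → D),
    (∀ B ∈ Γ, feval3 cv pv σ B = V3.t) → feval3 cv pv σ A ∈ ({V3.t, V3.i} : Set V3)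

/-! The map `2^n → {0, 1/2, 1}` sending `⟨1,…,1⟩` to `1`, `⟨0,…,0⟩` to `0` and every other
tuple to `1/2` is monotone and commutes with complement; since infima and suprema of finitely
many values are attained, it commutes with the evaluation of all formulas. It therefore turns a
Clemens interpretation into a three-valued one with the same strict-tolerant verdict, and for
`n ≥ 2` every three-valued interpretation arises this way, by reading `1/2` as `⟨1,0,…,0⟩`. -/

namespace Tup

variable {n : ℕ}

lemma ext_iff {x y : Tup n} : x = y ↔ ∀ i, ofLex x i = ofLex y i :=
  ofLex.injective.eq_iff.symm.trans funext_iff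

lemma le_tTop (x : Tup n) : x ≤ tTop n :=
  Pi.toLex_monotone fun i => Bool.le_true (ofLex x i)

lemma tBot_le (x : Tup n) : tBot n ≤ x :=
  Pi.toLex_monotone fun i => Bool.false_le (ofLex x i)

lemma tTop_ne_tBot (hn : n ≠ 0) : tTop n ≠ tBot n := fun h => by
  simpa [tTop, tBot] using ext_iff.mp h ⟨0, Nat.pos_of_ne_zero hn⟩

lemma tneg_eq_tTop_iff {x : Tup n} : tneg x = tTop n ↔ x = tBot n := by
  simp [ext_iff, tneg, tTop, tBot, funext_iff]

lemma tneg_eq_tBot_iff {x : Tup n} : tneg x = tBot n ↔ x = tTop n := by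
  simp [ext_iff, tneg, tTop, tBot, funext_iff]

end Tup

lemma Monotone.map_iInf_of_wellFoundedLT {α β ι : Type*} [ConditionallyCompleteLinearOrder α]
    [WellFoundedLT α] [ConditionallyCompleteLattice β] [Nonempty ι] {f : α → β}
    (hf : Monotone f) (g : ι → α) : f (⨅ i, g i) = ⨅ i, f (g i) := by
  rw [iInf, hf.map_csInf (Set.range_nonempty g), ← Set.range_comp]; rfl

lemma Monotone.map_iSup_of_wellFoundedGT {α β ι : Type*} [ConditionallyCompleteLinearOrder α]
    [WellFoundedGT α] [ConditionallyCompleteLattice β] [Nonempty ι] {f : α → β}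
    (hf : Monotone f) (g : ι → α) : f (⨆ i, g i) = ⨆ i, f (g i) :=
  hf.dual.map_iInf_of_wellFoundedLT (α := αᵒᵈ) (β := βᵒᵈ) g

def collapse {n : ℕ} (x : Tup n) : V3 :=
  if x = tTop n then .t else if x = tBot n then .f else .i

section collapse

variable {n : ℕ}

lemma collapse_eq_t_iff {x : Tup n} : collapse x = .t ↔ x = tTop n := by
  unfold collapse; split_ifs <;> simp_all

lemma collapse_eq_f_iff (hn : n ≠ 0) {x : Tup n} : collapse x = .f ↔ x = tBot n := by
  unfold collapse; split_ifs <;> simp_all [Tup.tTop_ne_tBot hn]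

lemma collapse_monotone : Monotone (collapse (n := n)) := by
  intro x y hxy
  unfold collapse
  split_ifs <;> subst_vars <;> first
    | decide
    | exact absurd (le_antisymm (Tup.le_tTop _) hxy) ‹_›
    | exact absurd (le_antisymm hxy (Tup.tBot_le _)) ‹_›

lemma collapse_tneg (hn : n ≠ 0) (x : Tup n) : collapse (tneg x) = (collapse x).negv := by
  have := Tup.tTop_ne_tBot hn
  unfold collapse
  split_ifs <;> simp_all [Tup.tneg_eq_tTop_iff, Tup.tneg_eq_tBot_iff, V3.negv]

end collapse

lemma feval3_collapse {Pred Const : Type} {ar : Pred → ℕ} {n : ℕ} (hn : n ≠ 0)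
    {D : Type} [Nonempty D] (cv : Const → D) (pv : (P : Pred) → (Fin (ar P) → D) → Tup n)
    (A : FForm Pred Const ar) (σ : ℕ → D) :
    feval3 cv (fun P args => collapse (pv P args)) σ A = collapse (fevalT cv pv σ A) := by
  -- The quantifier clauses of `fevalT` use the lexicographic-product lattice structure,
  -- not the `Fintype` one declared for `Tup n`.
  let : CompleteLinearOrder (Tup n) := Pi.Lex.instCompleteLinearOrderLexForall
  induction A generalizing σ with
  | atom P ts => rfl
  | neg A ih => simp only [feval3, fevalT, ih, collapse_tneg hn]
  | conj A B ihA ihB => simp only [feval3, fevalT, ihA, ihB, collapse_monotone.map_min]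
  | disj A B ihA ihB => simp only [feval3, fevalT, ihA, ihB, collapse_monotone.map_max]
  | all x A ih =>
    simp only [feval3, fevalT, ih]
    exact (collapse_monotone.map_iInf_of_wellFoundedLT _).symm
  | ex x A ih =>
    simp only [feval3, fevalT, ih]
    exact (collapse_monotone.map_iSup_of_wellFoundedGT _).symm

def V3.toTup (n : ℕ) : V3 → Tup n
  | .t => tTop n
  | .i => toLex fun j => decide (j.val = 0)
  | .f => tBot n

lemma collapse_toTup {n : ℕ} (hn : 2 ≤ n) (v : V3) : collapse (v.toTup n) = v := by
  have hTop : tTop n ≠ tBot n := Tup.tTop_ne_tBot (by omega : n ≠ 0)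
  cases v with
  | t => simp [V3.toTup, collapse]
  | f => simp [V3.toTup, collapse, hTop.symm]
  | i =>
    have hne_top : V3.i.toTup n ≠ tTop n := fun h => by
      simpa [V3.toTup, tTop] using Tup.ext_iff.mp h ⟨1, by omega⟩
    have hne_bot : V3.i.toTup n ≠ tBot n := fun h => by
      simpa [V3.toTup, tBot] using Tup.ext_iff.mp h ⟨0, by omega⟩
    simp [collapse, hne_top, hne_bot]

lemma V3.mem_t_i_iff {v : V3} : v ∈ ({V3.t, V3.i} : Set V3) ↔ v ≠ .f := by
  cases v <;> simp

lemma st_condition_collapse_iff {Pred Const : Type} {ar : Pred → ℕ} {n : ℕ} (hn : n ≠ 0)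
    {D : Type} [Nonempty D] (cv : Const → D) (pv : (P : Pred) → (Fin (ar P) → D) → Tup n)
    (σ : ℕ → D) (Γ : Set (FForm Pred Const ar)) (A : FForm Pred Const ar) :
    ((∀ B ∈ Γ, feval3 cv (fun P args => collapse (pv P args)) σ B = .t) →
        feval3 cv (fun P args => collapse (pv P args)) σ A ∈ ({V3.t, V3.i} : Set V3)) ↔
      ((∀ B ∈ Γ, fevalT cv pv σ B = tTop n) → fevalT cv pv σ A ≠ tBot n) := by
  simp only [feval3_collapse hn, collapse_eq_t_iff, V3.mem_t_i_iff, ne_eq, collapse_eq_f_iff hn]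

/-- strict-tolerant `n`-tuple consequence coincides with ST consequence. -/
theorem strictTolerant_iff_ST (n : ℕ) (hn : 2 ≤ n) (Pred Const : Type) (ar : Pred → ℕ)
    (Γ : Set (FForm Pred Const ar)) (A : FForm Pred Const ar) :
    ConseqNST n Pred Const ar Γ A ↔ ConseqST Pred Const ar Γ A := by
  have hn₀ : n ≠ 0 := by omega
  constructor
  · intro hNST D hD cv pv σ
    have hpv : pv = fun P args => collapse ((pv P args).toTup n) := by
      simp only [collapse_toTup hn]
    rw [hpv, st_condition_collapse_iff hn₀]
    exact hNST D hD cv _ σ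
  · intro hST D hD cv pv σ
    rw [← st_condition_collapse_iff hn₀]
    exact hST D hD cv _ σ
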